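/- Suppose the cost functions are separable with each edge cost function c_e : ℝ_{≥0} → ℝ continuous and strictly increasing, so that c_{i,p}(x) = ∑_{e∈p} c_e(x_e) where x_e = ∑_{(i,p): e∈p} x_{i,p} is the edge load. Then any two Wardrop equilibria x and y with respect to c have identical edge loads: x_e = y_e for all edges e ∈ E. In particular, for constant separable externality factors g_e ≥ 0, the total externality G(x) = ∑_{e∈E} g_e·x_e takes the same value at every Wardrop equilibrium. -/
import Mathlib


open Finset

variable {E : Type*} [Fintype E] [DecidableEq E]
  {I : Type*} [Fintype I] {P : I → Type*} [∀ i, Fintype (P i)]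

/-- A flow is feasible if it is nonnegative and satisfies all demands. -/
def Feasible (d : I → ℝ) (x : ∀ i, P i → ℝ) : Prop :=
  (∀ i p, 0 ≤ x i p) ∧ ∀ i, ∑ p, x i p = d i

/-- The load of edge `e` under flow `x`, where `edges i p` is the edge set of path `p`. -/
def edgeLoad (edges : ∀ i, P i → Finset E) (x : ∀ i, P i → ℝ) (e : E) : ℝ :=
  ∑ i, ∑ p, if e ∈ edges i p then x i p else 0

/-- The separable cost of path `p` of commodity `i`: the sum over its edges of the
edge cost evaluated at the edge load. -/
def pathCost (edges : ∀ i, P i → Finset E) (c : E → ℝ → ℝ)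
    (x : ∀ i, P i → ℝ) (i : I) (p : P i) : ℝ :=
  ∑ e ∈ edges i p, c e (edgeLoad edges x e)

/-- Wardrop equilibrium with respect to separable edge costs. -/
def IsWardrop (d : I → ℝ) (edges : ∀ i, P i → Finset E) (c : E → ℝ → ℝ)
    (x : ∀ i, P i → ℝ) : Prop :=
  Feasible d x ∧
    ∀ i p, 0 < x i p → ∀ q, pathCost edges c x i p ≤ pathCost edges c x i q

lemma edgeLoad_nonneg (edges : ∀ i, P i → Finset E) {x : ∀ i, P i → ℝ}
    (hx : ∀ i p, 0 ≤ x i p) (e : E) : 0 ≤ edgeLoad edges x e := by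
  apply Finset.sum_nonneg; intro i _
  apply Finset.sum_nonneg; intro p _
  split
  · exact hx i p
  · exact le_refl 0

lemma cost_sum_eq (edges : ∀ i, P i → Finset E) (c : E → ℝ → ℝ)
    (w z : ∀ i, P i → ℝ) :
    ∑ i, ∑ p, pathCost edges c w i p * z i p
      = ∑ e, c e (edgeLoad edges w e) * edgeLoad edges z e := by
  simp only [pathCost, edgeLoad, Finset.sum_mul, Finset.mul_sum, mul_ite, mul_zero]
  rw [Finset.sum_comm]
  refine Finset.sum_congr rfl fun i _ => ?_
  rw [Finset.sum_comm]
  refine Finset.sum_congr rfl fun p _ => ?_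
  rw [← Finset.sum_filter, Finset.filter_mem_eq_inter, Finset.univ_inter]

lemma equilibrium_min {d : I → ℝ} {edges : ∀ i, P i → Finset E} {c : E → ℝ → ℝ}
    [∀ i, Nonempty (P i)]
    {x : ∀ i, P i → ℝ} (hx : IsWardrop d edges c x)
    {z : ∀ i, P i → ℝ} (hz : Feasible d z) :
    ∑ i, ∑ p, pathCost edges c x i p * x i p
      ≤ ∑ i, ∑ p, pathCost edges c x i p * z i p := by
  apply Finset.sum_le_sum
  intro i _
  set m := Finset.univ.inf' Finset.univ_nonempty (pathCost edges c x i) with hm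
  have h1 : ∑ p, pathCost edges c x i p * x i p = m * d i := by
    rw [← hx.1.2 i, Finset.mul_sum]
    refine Finset.sum_congr rfl fun p _ => ?_
    rcases lt_or_eq_of_le (hx.1.1 i p) with hp | hp
    · congr 1
      refine le_antisymm ?_ (Finset.inf'_le _ (Finset.mem_univ p))
      exact Finset.le_inf' _ _ fun q _ => hx.2 i p hp q
    · rw [← hp, mul_zero, mul_zero]
  have h2 : m * d i ≤ ∑ p, pathCost edges c x i p * z i p := by
    rw [← hz.2 i, Finset.mul_sum]
    refine Finset.sum_le_sum fun q _ => ?_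
    exact mul_le_mul_of_nonneg_right (Finset.inf'_le _ (Finset.mem_univ q)) (hz.1 i q)
  linarith

/-- for separable, continuous and strictly increasing edge cost functions,
any two Wardrop equilibria have identical edge loads; in particular, for constant
separable externality factors `g_e ≥ 0` the total externality `∑_e g_e·x_e` takes the
same value at every Wardrop equilibrium. -/
theorem wardrop_edge_loads_unique
    [∀ i, Nonempty (P i)]
    (d : I → ℝ) (hd : ∀ i, 0 < d i)
    (edges : ∀ i, P i → Finset E) (hedges : ∀ i p, (edges i p).Nonempty)
    (c : E → ℝ → ℝ)
    (hcont : ∀ e, ContinuousOn (c e) (Set.Ici 0))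
    (hmono : ∀ e, StrictMonoOn (c e) (Set.Ici 0))
    (x y : ∀ i, P i → ℝ)
    (hx : IsWardrop d edges c x) (hy : IsWardrop d edges c y) :
    (∀ e, edgeLoad edges x e = edgeLoad edges y e) ∧
    (∀ g : E → ℝ, (∀ e, 0 ≤ g e) →
      ∑ e, g e * edgeLoad edges x e = ∑ e, g e * edgeLoad edges y e) := by
  set Lx := edgeLoad edges x with hLx
  set Ly := edgeLoad edges y with hLy
  have hLxn : ∀ e, (0:ℝ) ≤ Lx e := edgeLoad_nonneg edges hx.1.1
  have hLyn : ∀ e, (0:ℝ) ≤ Ly e := edgeLoad_nonneg edges hy.1.1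
  have S1 : ∑ e, c e (Lx e) * Lx e ≤ ∑ e, c e (Lx e) * Ly e := by
    rw [← cost_sum_eq, ← cost_sum_eq]; exact equilibrium_min hx hy.1
  have S2 : ∑ e, c e (Ly e) * Ly e ≤ ∑ e, c e (Ly e) * Lx e := by
    rw [← cost_sum_eq, ← cost_sum_eq]; exact equilibrium_min hy hx.1
  have hterm : ∀ e, 0 ≤ (c e (Lx e) - c e (Ly e)) * (Lx e - Ly e) := by
    intro e
    rcases lt_trichotomy (Lx e) (Ly e) with h | h | h
    · have := (hmono e) (hLxn e) (hLyn e) h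
      nlinarith
    · simp [h]
    · have := (hmono e) (hLyn e) (hLxn e) h
      nlinarith
  have hsum : ∑ e, (c e (Lx e) - c e (Ly e)) * (Lx e - Ly e) ≤ 0 := by
    have : ∑ e, (c e (Lx e) - c e (Ly e)) * (Lx e - Ly e)
        = (∑ e, c e (Lx e) * Lx e) - (∑ e, c e (Lx e) * Ly e)
          - (∑ e, c e (Ly e) * Lx e) + (∑ e, c e (Ly e) * Ly e) := by
      rw [← Finset.sum_sub_distrib, ← Finset.sum_sub_distrib, ← Finset.sum_add_distrib]
      refine Finset.sum_congr rfl fun e _ => by ring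
    linarith
  have hzero : ∀ e ∈ Finset.univ, (c e (Lx e) - c e (Ly e)) * (Lx e - Ly e) = 0 := by
    rw [← Finset.sum_eq_zero_iff_of_nonneg fun e _ => hterm e]
    exact le_antisymm hsum (Finset.sum_nonneg fun e _ => hterm e)
  have heq : ∀ e, Lx e = Ly e := by
    intro e
    by_contra h
    rcases lt_or_gt_of_ne h with h | h
    · have := (hmono e) (hLxn e) (hLyn e) h
      have := hzero e (Finset.mem_univ e)
      nlinarith
    · have := (hmono e) (hLyn e) (hLxn e) h
      have := hzero e (Finset.mem_univ e)
      nlinarith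
  exact ⟨heq, fun g _ => Finset.sum_congr rfl fun e _ => by rw [heq e]⟩
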